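/- arXiv:2403.08065 — 2 statements merged into one kernel-verified Lean document; each statement's English description precedes it below -/
import Mathlib

section
/- Let n, p, d, m be positive integers; let A be n×n, C be p×n, D be n×d, B be n×m, and Ẑ be n×p real matrices; let Ŷ ≻ 0 be a symmetric n×n matrix, Ē a symmetric n×n matrix, and let W (d×d), V (p×p), Γ_w (m×m) be symmetric positive definite matrices. Define B̂ = Ŷ⁻¹Ẑ and E = Ŷ⁻¹. Then the following two conditions are equivalent: (i) the block matrix [[Ē, I], [I, Ŷ]] is positive definite AND the symmetric 5×5 block matrix with upper-triangular blocks given by row 1: [Ŷ, ŶA − ẐC, ŶD, ŶB, Ẑ], row 2: [Ŷ, 0, 0, 0], row 3: [W⁻¹, 0, 0], row 4: [Γ_w, 0], row 5: [V⁻¹] is positive definite; (ii) E ≺ Ē AND (A − B̂C)E(A − B̂C)ᵀ + DWDᵀ + BΓ_w⁻¹Bᵀ + B̂VB̂ᵀ ≺ E. -/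
/-!
Each condition of (i) turns into the matching one of (ii) by Schur complements. The Schur
complement of `Ŷ` in `[[Ē, I], [I, Ŷ]]` is `Ē - Ŷ⁻¹ = Ē - E`. In the 5×5 LMI, removing in turn
the blocks `V⁻¹`, `diag(W⁻¹, Γ_w)` and `Ŷ` leaves
`Ŷ - ẐVẐᵀ - ŶDWDᵀŶ - ŶBΓ_w⁻¹BᵀŶ - (ŶA - ẐC)Ŷ⁻¹(ŶA - ẐC)ᵀ`, and with `Ẑ = ŶB̂` this is
`Ŷ (E - (A - B̂C)E(A - B̂C)ᵀ - DWDᵀ - BΓ_w⁻¹Bᵀ - B̂VB̂ᵀ) Ŷ`, a congruence of the matrix in (ii).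
-/

open Matrix
open scoped ComplexOrder

namespace Matrix

variable {α 𝕜 : Type*} {k l m n o : Type*}

theorem fromBlocks_sub_fromBlocks_zero [AddGroup α] (A X : Matrix m l α) (B : Matrix m o α)
    (C : Matrix n l α) (D : Matrix n o α) :
    fromBlocks A B C D - fromBlocks X 0 0 0 = fromBlocks (A - X) B C D := by
  rw [sub_eq_add_neg, fromBlocks_neg, fromBlocks_add]
  simp [sub_eq_add_neg]

theorem fromRows_zero_mul_mul_conjTranspose [Semiring α] [StarRing α] [Fintype n]
    (Z : Matrix m n α) (M : Matrix n n α) :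
    fromRows Z (0 : Matrix l n α) * M * (fromRows Z 0)ᴴ
      = fromBlocks (Z * M * Zᴴ) 0 0 (0 : Matrix l l α) := by
  rw [conjTranspose_fromRows_eq_fromCols_conjTranspose, fromRows_mul, fromRows_mul_fromCols]
  simp

theorem fromBlocks_zero_zero_mul_mul_conjTranspose [Semiring α] [StarRing α] [Fintype m]
    [Fintype n] (P : Matrix k m α) (Q : Matrix k n α) (X : Matrix m m α) (Y : Matrix n n α) :
    fromBlocks P Q (0 : Matrix l m α) 0 * fromBlocks X 0 0 Y * (fromBlocks P Q 0 0)ᴴ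
      = fromBlocks (P * X * Pᴴ + Q * Y * Qᴴ) 0 0 (0 : Matrix l l α) := by
  simp [fromBlocks_conjTranspose, fromBlocks_multiply]

theorem inv_fromBlocks_zero [CommRing α] [Fintype m] [DecidableEq m] [Fintype n] [DecidableEq n]
    {A : Matrix m m α} {D : Matrix n n α} (hA : IsUnit A) (hD : IsUnit D) :
    (fromBlocks A 0 0 D)⁻¹ = fromBlocks A⁻¹ 0 0 D⁻¹ := by
  simp [inv_fromBlocks_zero₂₁_of_isUnit_iff A 0 D (iff_of_true hA hD)]

theorem self_sub_lmi_terms_eq_mul_mul_star [CommRing α] [StarRing α] [Fintype k] [Fintype l]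
    [Fintype m] [Fintype n] [DecidableEq n] {Y : Matrix n n α} (hY : Y.IsHermitian)
    (hYdet : IsUnit Y.det) (A : Matrix n n α) (C : Matrix m n α) (D : Matrix n k α)
    (B : Matrix n l α) (Bh : Matrix n m α) (W : Matrix k k α) (G : Matrix l l α)
    (V : Matrix m m α) :
    Y - Y * Bh * V * (Y * Bh)ᴴ - (Y * D * W * (Y * D)ᴴ + Y * B * G * (Y * B)ᴴ)
        - (Y * A - Y * Bh * C) * Y⁻¹ * (Y * A - Y * Bh * C)ᴴ
      = Y * (Y⁻¹ - ((A - Bh * C) * Y⁻¹ * (A - Bh * C)ᴴ + D * W * Dᴴ + B * G * Bᴴ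
          + Bh * V * Bhᴴ)) * star Y := by
  simp only [star_eq_conjTranspose, hY.eq, conjTranspose_mul, conjTranspose_sub, Matrix.mul_sub,
    Matrix.sub_mul, Matrix.mul_add, Matrix.add_mul, Matrix.mul_assoc,
    Matrix.mul_nonsing_inv_cancel_left Y Y hYdet]
  abel

variable [RCLike 𝕜] [Fintype m] [DecidableEq m] [Fintype n] [DecidableEq n]

/- Strict version of `Matrix.PosDef.fromBlocks₂₂`: positive definite means positive semidefinite
and nonsingular, and the determinant factors as `det D * det (A - B D⁻¹ Bᴴ)`. -/
theorem PosDef.posDef_fromBlocks₂₂_iff (A : Matrix m m 𝕜) (B : Matrix m n 𝕜) {D : Matrix n n 𝕜}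
    (hD : D.PosDef) :
    (fromBlocks A B Bᴴ D).PosDef ↔ (A - B * D⁻¹ * Bᴴ).PosDef := by
  let _ := hD.isUnit.invertible
  have hdet := det_fromBlocks₂₂ A B Bᴴ D
  rw [invOf_eq_nonsing_inv] at hdet
  constructor
  · intro h
    rw [((hD.fromBlocks₂₂ A B).mp h.posSemidef).posDef_iff_det_ne_zero]
    exact right_ne_zero_of_mul (hdet ▸ h.det_pos.ne')
  · intro h
    rw [((hD.fromBlocks₂₂ A B).mpr h.posSemidef).posDef_iff_det_ne_zero, hdet]
    exact mul_ne_zero hD.det_pos.ne' h.det_pos.ne'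

theorem PosDef.fromBlocks_zero {A : Matrix m m 𝕜} {D : Matrix n n 𝕜} (hA : A.PosDef)
    (hD : D.PosDef) : (fromBlocks A 0 0 D).PosDef := by
  simpa using (hD.posDef_fromBlocks₂₂_iff A 0).mpr (by simpa using hA)

end Matrix

theorem corollary2_estimator_lmi_general
    (n p d m : ℕ)
    (A : Matrix (Fin n) (Fin n) ℝ) (C : Matrix (Fin p) (Fin n) ℝ)
    (D : Matrix (Fin n) (Fin d) ℝ) (B : Matrix (Fin n) (Fin m) ℝ)
    (Zhat : Matrix (Fin n) (Fin p) ℝ)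
    (Yhat : Matrix (Fin n) (Fin n) ℝ) (hYhat : Yhat.PosDef)
    (Ebar : Matrix (Fin n) (Fin n) ℝ)
    (W : Matrix (Fin d) (Fin d) ℝ) (V : Matrix (Fin p) (Fin p) ℝ)
    (Gw : Matrix (Fin m) (Fin m) ℝ)
    (hW : W.PosDef) (hV : V.PosDef) (hGw : Gw.PosDef)
    (Bhat : Matrix (Fin n) (Fin p) ℝ) (E : Matrix (Fin n) (Fin n) ℝ)
    (hBhatdef : Bhat = Yhat⁻¹ * Zhat) (hEdef : E = Yhat⁻¹) :
    ((fromBlocks Ebar 1 1 Yhat).PosDef ∧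
      (fromBlocks
        (fromBlocks
          (fromBlocks Yhat (Yhat * A - Zhat * C) (Yhat * A - Zhat * C)ᵀ Yhat)
          (fromBlocks (Yhat * D) (Yhat * B) 0 0)
          (fromBlocks (Yhat * D) (Yhat * B) 0 0)ᵀ
          (fromBlocks W⁻¹ 0 0 Gw))
        (fromRows (fromRows Zhat 0) 0)
        (fromRows (fromRows Zhat 0) 0)ᵀ
        V⁻¹).PosDef)
    ↔
    ((Ebar - E).PosDef ∧
      (E - ((A - Bhat * C) * E * (A - Bhat * C)ᵀ + D * W * Dᵀ + B * Gw⁻¹ * Bᵀ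
        + Bhat * V * Bhatᵀ)).PosDef) := by
  have hYdet : IsUnit Yhat.det := hYhat.det_pos.ne'.isUnit
  have hZhat : Zhat = Yhat * Bhat := by
    rw [hBhatdef, Matrix.mul_nonsing_inv_cancel_left Yhat Zhat hYdet]
  subst hZhat hEdef
  simp only [← conjTranspose_eq_transpose_of_trivial]
  refine and_congr ?_ ?_
  · simpa using hYhat.posDef_fromBlocks₂₂_iff Ebar 1
  · have hS : (fromBlocks W⁻¹ 0 0 Gw).PosDef := hW.inv.fromBlocks_zero hGw
    rw [hV.inv.posDef_fromBlocks₂₂_iff, nonsing_inv_nonsing_inv V hV.det_pos.ne'.isUnit,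
      fromRows_zero_mul_mul_conjTranspose, fromBlocks_sub_fromBlocks_zero,
      fromRows_zero_mul_mul_conjTranspose, fromBlocks_sub_fromBlocks_zero,
      hS.posDef_fromBlocks₂₂_iff, inv_fromBlocks_zero hW.inv.isUnit hGw.isUnit,
      nonsing_inv_nonsing_inv W hW.det_pos.ne'.isUnit,
      fromBlocks_zero_zero_mul_mul_conjTranspose, fromBlocks_sub_fromBlocks_zero,
      hYhat.posDef_fromBlocks₂₂_iff, self_sub_lmi_terms_eq_mul_mul_star hYhat.isHermitian hYdet]
    exact hYhat.isUnit.posDef_star_right_conjugate_iff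

/-- Corollary 2: estimator design for an unstable system when the adversary has
direct access to the measurements, with estimator gain `B̂ = Ŷ⁻¹Ẑ`, error
covariance bound `Ē`, process noise covariance `W`, input privacy noise
covariance `Γ_w⁻¹`, and measurement noise covariance `V`. -/
theorem corollary2_estimator_lmi
    (n p d m : ℕ) (hn : 0 < n) (hp : 0 < p) (hd : 0 < d) (hm : 0 < m)
    (A : Matrix (Fin n) (Fin n) ℝ) (C : Matrix (Fin p) (Fin n) ℝ)
    (D : Matrix (Fin n) (Fin d) ℝ) (B : Matrix (Fin n) (Fin m) ℝ)
    (Zhat : Matrix (Fin n) (Fin p) ℝ)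
    (Yhat : Matrix (Fin n) (Fin n) ℝ) (hYhat : Yhat.PosDef)
    (Ebar : Matrix (Fin n) (Fin n) ℝ) (hEbar : Ebar.IsHermitian)
    (W : Matrix (Fin d) (Fin d) ℝ) (V : Matrix (Fin p) (Fin p) ℝ)
    (Gw : Matrix (Fin m) (Fin m) ℝ)
    (hW : W.PosDef) (hV : V.PosDef) (hGw : Gw.PosDef)
    (Bhat : Matrix (Fin n) (Fin p) ℝ) (E : Matrix (Fin n) (Fin n) ℝ)
    (hBhatdef : Bhat = Yhat⁻¹ * Zhat) (hEdef : E = Yhat⁻¹) :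
    ((fromBlocks Ebar 1 1 Yhat).PosDef ∧
      (fromBlocks
        (fromBlocks
          (fromBlocks Yhat (Yhat * A - Zhat * C) (Yhat * A - Zhat * C)ᵀ Yhat)
          (fromBlocks (Yhat * D) (Yhat * B) 0 0)
          (fromBlocks (Yhat * D) (Yhat * B) 0 0)ᵀ
          (fromBlocks W⁻¹ 0 0 Gw))
        (fromRows (fromRows Zhat 0) 0)
        (fromRows (fromRows Zhat 0) 0)ᵀ
        V⁻¹).PosDef)
    ↔
    ((Ebar - E).PosDef ∧
      (E - ((A - Bhat * C) * E * (A - Bhat * C)ᵀ + D * W * Dᵀ + B * Gw⁻¹ * Bᵀ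
        + Bhat * V * Bhatᵀ)).PosDef) :=
  corollary2_estimator_lmi_general n p d m A C D B Zhat Yhat hYhat Ebar W V Gw hW hV hGw Bhat E
    hBhatdef hEdef
end

section
/- Let n, m, p, d be positive integers. Let A (n×n), B (n×m), C (p×n), D (n×d) be real matrices; let W (d×d), V (p×p), Γ_w (m×m) be symmetric positive definite matrices, Ē a symmetric n×n matrix, X̂ and Ŷ symmetric n×n matrices, Q̂ an n×n matrix, F̂ an n×p matrix, and Û an invertible n×n matrix. Assume: (i) the symmetric 7×7 block matrix with upper-triangular blocks given by row 1: [X̂, I, A·X̂, A, D, B, 0], row 2: [Ŷ, Q̂, Ŷ·A + F̂·C, Ŷ·D, Ŷ·B, F̂], row 3: [X̂, I, 0, 0, 0], row 4: [Ŷ, 0, 0, 0], row 5: [W⁻¹, 0, 0], row 6: [Γ_w, 0], row 7: [V⁻¹] is positive definite; and (ii) the block matrix [[Ē, X̂ − Û, I], [(X̂ − Û)ᵀ, X̂, I], [I, I, Ŷ]] is positive definite. Then Ŝ := (I − Ŷ·X̂)·Û⁻¹ is invertible, and defining Â = Ŝ⁻¹·(Q̂ − Ŷ·A·X̂ − F̂·C·X̂)·Û⁻¹,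 B̂ = Ŝ⁻¹·F̂, and the augmented matrices 𝐀̂ = [[A, 0], [B̂·C, Â]] (2n×2n), 𝐁̂ = [[D, B, 0], [0, 0, B̂]] (2n×(d+m+p)), 𝐂̂ = [I, −I] (n×2n), 𝐖 = blockdiag(W, Γ_w⁻¹, V), there exists a symmetric positive definite 2n×2n matrix 𝐗̂ such that 𝐗̂ − 𝐀̂𝐗̂𝐀̂ᵀ − 𝐁̂𝐖𝐁̂ᵀ is positive definite and Ē − 𝐂̂𝐗̂𝐂̂ᵀ is positive definite. -/
/-!
Scherer's change of variables. With `Φ = [[X̂, I], [Û, 0]]`, `Ψ = [[I, Ŷ], [0, Ŝᴴ]]` and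
`P = [[X̂, I], [I, Ŷ]]` one has `Ψᴴ Φ = P`, and the certificate is `𝐗̂ = Φ P⁻¹ Φᴴ`, so that
`𝐗̂ Ψ = Φ`. The formulas for `Â` and `B̂` are exactly what makes `Ψᴴ 𝐀̂ Φ` and `Ψᴴ 𝐁̂` the blocks
of the 7 × 7 LMI, which is therefore the congruence by `diag(Ψ, Ψ, I)` of
`[[𝐗̂, 𝐀̂𝐗̂, 𝐁̂], [⋆, 𝐗̂, 0], [⋆, ⋆, 𝐖⁻¹]]`; two Schur complements of the latter give the Lyapunov
inequality. Likewise `𝐂̂ Φ = [X̂ - Û, I]`, so the Schur complement of the second LMI is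
`Ē - 𝐂̂𝐗̂𝐂̂ᵀ`. Finally `X̂ - Ŷ⁻¹ ≻ 0` makes `I - ŶX̂ = -Ŷ (X̂ - Ŷ⁻¹)`, hence `Ŝ`, invertible.
-/

open Matrix
open scoped ComplexOrder

namespace Matrix

variable {𝕜 ι κ : Type*} [RCLike 𝕜]

theorem PosDef.of_fromBlocks₁₁ {A : Matrix ι ι 𝕜} {B : Matrix ι κ 𝕜} {C : Matrix κ ι 𝕜}
    {D : Matrix κ κ 𝕜} (h : (fromBlocks A B C D).PosDef) : A.PosDef :=
  h.submatrix Sum.inl_injective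

theorem PosDef.of_fromBlocks₂₂ {A : Matrix ι ι 𝕜} {B : Matrix ι κ 𝕜} {C : Matrix κ ι 𝕜}
    {D : Matrix κ κ 𝕜} (h : (fromBlocks A B C D).PosDef) : D.PosDef :=
  h.submatrix Sum.inr_injective

theorem fromBlocks_conjugate_blockDiagonal [Fintype ι] [Fintype κ] {T₁ : Matrix ι ι 𝕜}
    {T₂ : Matrix κ κ 𝕜} (A : Matrix ι ι 𝕜) (B : Matrix ι κ 𝕜) (C : Matrix κ ι 𝕜)
    (D : Matrix κ κ 𝕜) :
    (fromBlocks T₁ 0 0 T₂)ᴴ * fromBlocks A B C D * fromBlocks T₁ 0 0 T₂ =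
      fromBlocks (T₁ᴴ * A * T₁) (T₁ᴴ * B * T₂) (T₂ᴴ * C * T₁) (T₂ᴴ * D * T₂) := by
  simp [fromBlocks_conjTranspose, fromBlocks_multiply]

theorem inv_fromBlocks_zero_zero {α : Type*} [CommRing α] [Fintype ι] [Fintype κ]
    [DecidableEq ι] [DecidableEq κ] {A : Matrix ι ι α} {D : Matrix κ κ α} (hA : IsUnit A)
    (hD : IsUnit D) :
    (fromBlocks A 0 0 D)⁻¹ = fromBlocks A⁻¹ 0 0 D⁻¹ := by
  simp [inv_fromBlocks_zero₂₁_of_isUnit_iff _ _ _ (iff_of_true hA hD)]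

variable [Fintype ι] [Fintype κ] [DecidableEq ι] [DecidableEq κ]

theorem PosDef.schur₂₂ {A : Matrix ι ι 𝕜} {B : Matrix ι κ 𝕜} {D : Matrix κ κ 𝕜}
    (h : (fromBlocks A B Bᴴ D).PosDef) : (A - B * D⁻¹ * Bᴴ).PosDef := by
  have hD := h.of_fromBlocks₂₂
  let := hD.isUnit.invertible
  have hunit := h.isUnit
  rw [isUnit_fromBlocks_iff_of_invertible₂₂, invOf_eq_nonsing_inv] at hunit
  exact ((PosDef.fromBlocks₂₂ A B hD).mp h.posSemidef).posDef_iff_isUnit.mpr hunit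

theorem posDef_lyapunov_of_posDef_fromBlocks {X A : Matrix ι ι 𝕜} {B : Matrix ι κ 𝕜}
    {R : Matrix κ κ 𝕜}
    (h : (fromBlocks (fromBlocks X (A * X) (A * X)ᴴ X) (fromRows B 0) (fromRows B 0)ᴴ R).PosDef) :
    (X - A * X * Aᴴ - B * R⁻¹ * Bᴴ).PosDef := by
  have hX := h.of_fromBlocks₁₁.of_fromBlocks₂₂
  have hBlocks : fromBlocks X (A * X) (A * X)ᴴ X - fromRows B 0 * R⁻¹ * (fromRows B 0)ᴴ =
      fromBlocks (X - B * R⁻¹ * Bᴴ) (A * X) (A * X)ᴴ X := by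
    rw [conjTranspose_fromRows_eq_fromCols_conjTranspose, fromRows_mul, fromRows_mul_fromCols,
      sub_eq_add_neg, fromBlocks_neg, fromBlocks_add]
    simp [sub_eq_add_neg]
  have hAX : A * X * X⁻¹ * (A * X)ᴴ = A * X * Aᴴ := by
    rw [conjTranspose_mul, hX.isHermitian.eq, ← mul_assoc,
      nonsing_inv_mul_cancel_right _ _ ((isUnit_iff_isUnit_det X).mp hX.isUnit)]
  have h₂ := (hBlocks ▸ h.schur₂₂).schur₂₂
  rwa [hAX, sub_right_comm] at h₂

theorem posDef_lyapunov_of_posDef_congr {X A T : Matrix ι ι 𝕜} {B : Matrix ι κ 𝕜}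
    {R : Matrix κ κ 𝕜} (hT : IsUnit T)
    (h : (fromBlocks
      (fromBlocks (Tᴴ * X * T) (Tᴴ * (A * X) * T) (Tᴴ * (A * X) * T)ᴴ (Tᴴ * X * T))
      (fromRows (Tᴴ * B) 0) (fromRows (Tᴴ * B) 0)ᴴ R).PosDef) :
    (X - A * X * Aᴴ - B * R⁻¹ * Bᴴ).PosDef := by
  apply posDef_lyapunov_of_posDef_fromBlocks
  have hS : IsUnit (fromBlocks (fromBlocks T 0 0 T) 0 0 (1 : Matrix κ κ 𝕜)) := by simp [hT]
  rw [← hS.posDef_star_left_conjugate_iff, star_eq_conjTranspose,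
    fromBlocks_conjugate_blockDiagonal, fromBlocks_conjugate_blockDiagonal]
  convert h using 2 <;>
    simp [fromBlocks_conjTranspose, conjTranspose_fromRows_eq_fromCols_conjTranspose,
      fromBlocks_mul_fromRows, fromCols_mul_fromBlocks, mul_assoc]

theorem posDef_mul_inv_mul_conjTranspose {P Φ Ψ : Matrix ι ι 𝕜} (hP : P.PosDef) (hΨ : IsUnit Ψ)
    (h : Ψᴴ * Φ = P) : (Φ * P⁻¹ * Φᴴ).PosDef := by
  have hΦ : IsUnit Φ := hΨ.star.mul_left_iff.mp (h ▸ hP.isUnit)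
  rw [← star_eq_conjTranspose, hΦ.posDef_star_right_conjugate_iff]
  exact posDef_inv_iff.mpr hP

theorem mul_inv_mul_conjTranspose_mul_eq {P Φ Ψ : Matrix ι ι 𝕜} (hP : P.PosDef)
    (h : Ψᴴ * Φ = P) : Φ * P⁻¹ * Φᴴ * Ψ = Φ := by
  have h' : Φᴴ * Ψ = P := by
    rw [← hP.isHermitian.eq, ← h, conjTranspose_mul, conjTranspose_conjTranspose]
  rw [mul_assoc, h', nonsing_inv_mul_cancel_right _ _ ((isUnit_iff_isUnit_det P).mp hP.isUnit)]

theorem posDef_sub_conj_of_posDef_fromBlocks {E : Matrix κ κ 𝕜} {C : Matrix κ ι 𝕜}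
    {P Φ : Matrix ι ι 𝕜} (h : (fromBlocks E (C * Φ) (C * Φ)ᴴ P).PosDef) :
    (E - C * (Φ * P⁻¹ * Φᴴ) * Cᴴ).PosDef := by
  simpa only [conjTranspose_mul, Matrix.mul_assoc] using h.schur₂₂

end Matrix

section ChangeOfVariables

variable {𝕜 n : Type*} [RCLike 𝕜] [Fintype n] [DecidableEq n] {X Y U S : Matrix n n 𝕜}

theorem isUnit_one_sub_mul_of_posDef_fromBlocks (h : (fromBlocks X 1 1 Y).PosDef) :
    IsUnit (1 - Y * X) := by
  have hY := h.of_fromBlocks₂₂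
  have hXY : (X - Y⁻¹).PosDef := by
    have h' : (fromBlocks X 1 (1 : Matrix n n 𝕜)ᴴ Y).PosDef := by rwa [conjTranspose_one]
    simpa using h'.schur₂₂
  have hYX : 1 - Y * X = -(Y * (X - Y⁻¹)) := by
    rw [mul_sub, mul_nonsing_inv _ ((isUnit_iff_isUnit_det Y).mp hY.isUnit), neg_sub]
  rw [hYX]
  exact (hY.isUnit.mul hXY.isUnit).neg

theorem changeOfVariables_gram (hY : Y.IsHermitian) (hU : IsUnit U.det)
    (hS : S = (1 - Y * X) * U⁻¹) :
    (fromBlocks 1 Y 0 Sᴴ)ᴴ * fromBlocks X 1 U 0 = fromBlocks X 1 1 Y := by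
  have hSU : S * U = 1 - Y * X := by rw [hS, nonsing_inv_mul_cancel_right _ _ hU]
  rw [fromBlocks_conjTranspose, fromBlocks_multiply]
  simp [hY.eq, hSU]

theorem changeOfVariables_closedLoop {p : Type*} [Fintype p] (hY : Y.IsHermitian)
    {A Q Ahat : Matrix n n 𝕜} {C : Matrix p n 𝕜} {F Bhat : Matrix n p 𝕜}
    (hU : IsUnit U.det) (hS : IsUnit S.det)
    (hA : Ahat = S⁻¹ * (Q - Y * A * X - F * C * X) * U⁻¹) (hB : Bhat = S⁻¹ * F) :
    (fromBlocks 1 Y 0 Sᴴ)ᴴ * (fromBlocks A 0 (Bhat * C) Ahat * fromBlocks X 1 U 0) =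
      fromBlocks (A * X) A Q (Y * A + F * C) := by
  have hSAU : S * Ahat * U = Q - Y * A * X - F * C * X := by
    rw [hA, ← mul_assoc S, mul_nonsing_inv_cancel_left _ _ hS, nonsing_inv_mul_cancel_right _ _ hU]
  obtain rfl : F = S * Bhat := by rw [hB, mul_nonsing_inv_cancel_left _ _ hS]
  obtain rfl : Q = Y * A * X + S * Bhat * C * X + S * Ahat * U := by
    rw [hSAU]; abel
  simp [fromBlocks_conjTranspose, fromBlocks_multiply, hY.eq, Matrix.mul_add, Matrix.mul_assoc,
    add_assoc]

theorem changeOfVariables_input {m p d : Type*} (hY : Y.IsHermitian) {D : Matrix n d 𝕜}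
    {B : Matrix n m 𝕜} {F Bhat : Matrix n p 𝕜} (hS : IsUnit S.det) (hB : Bhat = S⁻¹ * F) :
    fromRows ((fromBlocks 1 Y 0 Sᴴ)ᴴ * fromBlocks (fromCols D B) 0 0 Bhat)
        (0 : Matrix (n ⊕ n) _ 𝕜) =
      fromBlocks (fromBlocks D B (Y * D) (Y * B)) (fromRows 0 F) 0 0 := by
  obtain rfl : F = S * Bhat := by rw [hB, mul_nonsing_inv_cancel_left _ _ hS]
  ext ((i | i) | (i | i)) ((j | j) | j) <;>
    simp [fromBlocks_conjTranspose, fromBlocks_multiply, hY.eq, mul_fromCols]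

end ChangeOfVariables

theorem theorem2_estimator_synthesis_general
    (n m p d : ℕ)
    (A : Matrix (Fin n) (Fin n) ℝ) (B : Matrix (Fin n) (Fin m) ℝ)
    (C : Matrix (Fin p) (Fin n) ℝ) (D : Matrix (Fin n) (Fin d) ℝ)
    (W : Matrix (Fin d) (Fin d) ℝ) (V : Matrix (Fin p) (Fin p) ℝ)
    (Gw : Matrix (Fin m) (Fin m) ℝ)
    (hW : W.PosDef) (hV : V.PosDef) (hGw : Gw.PosDef)
    (Ebar : Matrix (Fin n) (Fin n) ℝ)
    (Xhat Yhat : Matrix (Fin n) (Fin n) ℝ)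
    (hYhatsymm : Yhat.IsHermitian)
    (Qhat : Matrix (Fin n) (Fin n) ℝ) (Fhat : Matrix (Fin n) (Fin p) ℝ)
    (Uhat : Matrix (Fin n) (Fin n) ℝ) (hUhatUnit : IsUnit Uhat)
    -- the 7×7 block LMI
    (hLMI1 :
      (fromBlocks
        (fromBlocks
          (fromBlocks Xhat 1 1 Yhat)
          (fromBlocks (A * Xhat) A Qhat (Yhat * A + Fhat * C))
          (fromBlocks (A * Xhat) A Qhat (Yhat * A + Fhat * C))ᵀ
          (fromBlocks Xhat 1 1 Yhat))
        (fromBlocks (fromBlocks D B (Yhat * D) (Yhat * B)) (fromRows 0 Fhat) 0 0)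
        (fromBlocks (fromBlocks D B (Yhat * D) (Yhat * B)) (fromRows 0 Fhat) 0 0)ᵀ
        (fromBlocks (fromBlocks W⁻¹ 0 0 Gw) 0 0 V⁻¹)).PosDef)
    -- the error-covariance LMI
    (hLMI2 :
      (fromBlocks Ebar (fromCols (Xhat - Uhat) 1)
        (fromRows (Xhat - Uhat)ᵀ 1) (fromBlocks Xhat 1 1 Yhat)).PosDef)
    -- estimator reconstruction
    (Shat : Matrix (Fin n) (Fin n) ℝ) (hShat : Shat = (1 - Yhat * Xhat) * Uhat⁻¹)
    (Ahat : Matrix (Fin n) (Fin n) ℝ)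
    (hAhat : Ahat = Shat⁻¹ * (Qhat - Yhat * A * Xhat - Fhat * C * Xhat) * Uhat⁻¹)
    (Bhat : Matrix (Fin n) (Fin p) ℝ) (hBhat : Bhat = Shat⁻¹ * Fhat) :
    IsUnit Shat ∧
    ∃ Xb : Matrix (Fin n ⊕ Fin n) (Fin n ⊕ Fin n) ℝ,
      Xb.PosDef ∧
      (Xb - (fromBlocks A 0 (Bhat * C) Ahat) * Xb * (fromBlocks A 0 (Bhat * C) Ahat)ᵀ
        - (fromBlocks (fromCols D B) 0 0 Bhat :
            Matrix (Fin n ⊕ Fin n) ((Fin d ⊕ Fin m) ⊕ Fin p) ℝ)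
          * (fromBlocks (fromBlocks W 0 0 Gw⁻¹) 0 0 V)
          * (fromBlocks (fromCols D B) 0 0 Bhat :
            Matrix (Fin n ⊕ Fin n) ((Fin d ⊕ Fin m) ⊕ Fin p) ℝ)ᵀ).PosDef ∧
      (Ebar - (fromCols 1 (-1) : Matrix (Fin n) (Fin n ⊕ Fin n) ℝ) * Xb
        * (fromCols 1 (-1) : Matrix (Fin n) (Fin n ⊕ Fin n) ℝ)ᵀ).PosDef := by
  simp only [← conjTranspose_eq_transpose_of_trivial] at hLMI1 hLMI2 ⊢
  have hP : (fromBlocks Xhat 1 1 Yhat : Matrix (Fin n ⊕ Fin n) _ ℝ).PosDef :=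
    hLMI1.of_fromBlocks₁₁.of_fromBlocks₁₁
  have hU := (isUnit_iff_isUnit_det Uhat).mp hUhatUnit
  have hS : IsUnit Shat := hShat ▸
    (isUnit_one_sub_mul_of_posDef_fromBlocks hP).mul (isUnit_nonsing_inv_iff.mpr hUhatUnit)
  have hSdet := (isUnit_iff_isUnit_det Shat).mp hS
  set Φ : Matrix (Fin n ⊕ Fin n) (Fin n ⊕ Fin n) ℝ := fromBlocks Xhat 1 Uhat 0
  set Ψ : Matrix (Fin n ⊕ Fin n) (Fin n ⊕ Fin n) ℝ := fromBlocks 1 Yhat 0 Shatᴴ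
  have hΨ : IsUnit Ψ := by simp [Ψ, hS]
  have hgram := changeOfVariables_gram hYhatsymm hU hShat
  have hX := mul_inv_mul_conjTranspose_mul_eq hP hgram
  refine ⟨hS, _, posDef_mul_inv_mul_conjTranspose hP hΨ hgram, ?_, ?_⟩
  · have hnoise : fromBlocks (fromBlocks W 0 0 Gw⁻¹) 0 0 V =
        (fromBlocks (fromBlocks W⁻¹ 0 0 Gw) 0 0 V⁻¹)⁻¹ := by
      simp [inv_fromBlocks_zero_zero, hW.isUnit, hGw.isUnit, hV.isUnit,
        nonsing_inv_nonsing_inv _ ((isUnit_iff_isUnit_det W).mp hW.isUnit),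
        nonsing_inv_nonsing_inv _ ((isUnit_iff_isUnit_det V).mp hV.isUnit)]
    rw [hnoise]
    refine posDef_lyapunov_of_posDef_congr hΨ ?_
    rwa [mul_assoc, hX, hgram, mul_assoc _ _ Ψ, mul_assoc _ _ Ψ, hX,
      changeOfVariables_closedLoop hYhatsymm hU hSdet hAhat hBhat,
      changeOfVariables_input hYhatsymm hSdet hBhat]
  · have hCΦ : (fromCols 1 (-1) : Matrix (Fin n) (Fin n ⊕ Fin n) ℝ) * Φ =
        fromCols (Xhat - Uhat) 1 := by
      simp [Φ, fromCols_mul_fromBlocks, sub_eq_add_neg]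
    apply posDef_sub_conj_of_posDef_fromBlocks
    rwa [hCΦ, conjTranspose_fromCols_eq_fromRows_conjTranspose, conjTranspose_one]

/-- Estimator-synthesis content of Theorem 2, where the adversary measures the
system output directly, so only the process noise covariance `W`, the input
privacy noise covariance `Γ_w⁻¹`, and the measurement noise covariance `V`
enter the adversary's estimator; the estimation-error covariance `𝐂̂𝐗̂𝐂̂ᵀ` is
bounded by `Ē`. -/
theorem theorem2_estimator_synthesis
    (n m p d : ℕ) (hn : 0 < n) (hm : 0 < m) (hp : 0 < p) (hd : 0 < d)
    (A : Matrix (Fin n) (Fin n) ℝ) (B : Matrix (Fin n) (Fin m) ℝ)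
    (C : Matrix (Fin p) (Fin n) ℝ) (D : Matrix (Fin n) (Fin d) ℝ)
    (W : Matrix (Fin d) (Fin d) ℝ) (V : Matrix (Fin p) (Fin p) ℝ)
    (Gw : Matrix (Fin m) (Fin m) ℝ)
    (hW : W.PosDef) (hV : V.PosDef) (hGw : Gw.PosDef)
    (Ebar : Matrix (Fin n) (Fin n) ℝ) (hEbar : Ebar.IsHermitian)
    (Xhat Yhat : Matrix (Fin n) (Fin n) ℝ)
    (hXhatsymm : Xhat.IsHermitian) (hYhatsymm : Yhat.IsHermitian)
    (Qhat : Matrix (Fin n) (Fin n) ℝ) (Fhat : Matrix (Fin n) (Fin p) ℝ)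
    (Uhat : Matrix (Fin n) (Fin n) ℝ) (hUhatUnit : IsUnit Uhat)
    -- the 7×7 block LMI
    (hLMI1 :
      (fromBlocks
        (fromBlocks
          (fromBlocks Xhat 1 1 Yhat)
          (fromBlocks (A * Xhat) A Qhat (Yhat * A + Fhat * C))
          (fromBlocks (A * Xhat) A Qhat (Yhat * A + Fhat * C))ᵀ
          (fromBlocks Xhat 1 1 Yhat))
        (fromBlocks (fromBlocks D B (Yhat * D) (Yhat * B)) (fromRows 0 Fhat) 0 0)
        (fromBlocks (fromBlocks D B (Yhat * D) (Yhat * B)) (fromRows 0 Fhat) 0 0)ᵀ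
        (fromBlocks (fromBlocks W⁻¹ 0 0 Gw) 0 0 V⁻¹)).PosDef)
    -- the error-covariance LMI
    (hLMI2 :
      (fromBlocks Ebar (fromCols (Xhat - Uhat) 1)
        (fromRows (Xhat - Uhat)ᵀ 1) (fromBlocks Xhat 1 1 Yhat)).PosDef)
    -- estimator reconstruction
    (Shat : Matrix (Fin n) (Fin n) ℝ) (hShat : Shat = (1 - Yhat * Xhat) * Uhat⁻¹)
    (Ahat : Matrix (Fin n) (Fin n) ℝ)
    (hAhat : Ahat = Shat⁻¹ * (Qhat - Yhat * A * Xhat - Fhat * C * Xhat) * Uhat⁻¹)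
    (Bhat : Matrix (Fin n) (Fin p) ℝ) (hBhat : Bhat = Shat⁻¹ * Fhat) :
    IsUnit Shat ∧
    ∃ Xb : Matrix (Fin n ⊕ Fin n) (Fin n ⊕ Fin n) ℝ,
      Xb.PosDef ∧
      (Xb - (fromBlocks A 0 (Bhat * C) Ahat) * Xb * (fromBlocks A 0 (Bhat * C) Ahat)ᵀ
        - (fromBlocks (fromCols D B) 0 0 Bhat :
            Matrix (Fin n ⊕ Fin n) ((Fin d ⊕ Fin m) ⊕ Fin p) ℝ)
          * (fromBlocks (fromBlocks W 0 0 Gw⁻¹) 0 0 V)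
          * (fromBlocks (fromCols D B) 0 0 Bhat :
            Matrix (Fin n ⊕ Fin n) ((Fin d ⊕ Fin m) ⊕ Fin p) ℝ)ᵀ).PosDef ∧
      (Ebar - (fromCols 1 (-1) : Matrix (Fin n) (Fin n ⊕ Fin n) ℝ) * Xb
        * (fromCols 1 (-1) : Matrix (Fin n) (Fin n ⊕ Fin n) ℝ)ᵀ).PosDef :=
  theorem2_estimator_synthesis_general n m p d A B C D W V Gw hW hV hGw Ebar Xhat Yhat hYhatsymm
    Qhat Fhat Uhat hUhatUnit hLMI1 hLMI2 Shat hShat Ahat hAhat Bhat hBhat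
end
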